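/- arXiv:2509.17706 — 4 statements merged into one kernel-verified Lean document; each statement's English description precedes it below -/
import Mathlib

section
/- Conflict detection correctness in Bool_θ(P): suppose there exists a dual-feasible solution for the constraint's LP with unary costs removed, i.e., y_cc ≥ 0 and reals (y_i)_{i∈S} with w_{iv}·y_cc + y_i ≤ δ_{iv} for all i ∈ S, v ∈ D_i, whose dual objective satisfies C·y_cc + Σ_{i∈S} y_i − δ_∅ ≥ θ. Then every tuple τ ∈ Π_{i∈S} D_i satisfying the constraint Σ_{i∈S} w_{iτ[i]} ≥ C has cost Σ_{i∈S} δ_{iτ[i]} − δ_∅ ≥ θ; that is, the constraint is conflicting in Bool_θ(P). -/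
open Finset

theorem Finset.mul_add_sum_le_sum_of_dual_feasible {ι : Type*} (s : Finset ι)
    (w y c : ι → ℝ) {C a : ℝ} (ha : 0 ≤ a) (hfeas : ∀ i ∈ s, w i * a + y i ≤ c i)
    (hrow : C ≤ ∑ i ∈ s, w i) :
    C * a + ∑ i ∈ s, y i ≤ ∑ i ∈ s, c i :=
  calc C * a + ∑ i ∈ s, y i ≤ (∑ i ∈ s, w i) * a + ∑ i ∈ s, y i := by gcongr
    _ = ∑ i ∈ s, (w i * a + y i) := by rw [sum_mul, sum_add_distrib]
    _ ≤ ∑ i ∈ s, c i := sum_le_sum hfeas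

theorem boolP_conflict_detection_general
    {ι : Type*} [Fintype ι]
    (D : ι → Type*)
    (w : ∀ i, D i → ℝ) (C : ℝ)
    (δ : ∀ i, D i → ℝ) (δ0 : ℝ) (θ : ℝ)
    (ycc : ℝ) (y : ι → ℝ)
    (hycc : 0 ≤ ycc)
    (hdual : ∀ i (v : D i), w i v * ycc + y i ≤ δ i v)
    (hobj : θ ≤ C * ycc + (∑ i, y i) - δ0) :
    ∀ τ : ∀ i, D i, C ≤ ∑ i, w i (τ i) → θ ≤ (∑ i, δ i (τ i)) - δ0 := by
  intro τ hτ
  have hdual_bound := univ.mul_add_sum_le_sum_of_dual_feasible (fun i => w i (τ i)) y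
    (fun i => δ i (τ i)) hycc (fun i _ => hdual i (τ i)) hτ
  linarith

/-- Conflict detection correctness in Bool_θ(P): a dual-feasible solution
(for the LP with unary costs removed) with dual objective at least θ certifies that every
tuple satisfying the linear constraint has cost at least θ. -/
theorem boolP_conflict_detection
    {ι : Type*} [Fintype ι] [Nonempty ι]
    (D : ι → Type*) [∀ i, Fintype (D i)] [∀ i, Nonempty (D i)]
    (w : ∀ i, D i → ℝ) (hw : ∀ i (v : D i), 0 ≤ w i v) (C : ℝ)
    (δ : ∀ i, D i → ℝ) (δ0 : ℝ) (θ : ℝ) (hθ : 0 < θ)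
    (ycc : ℝ) (y : ι → ℝ)
    (hycc : 0 ≤ ycc)
    (hdual : ∀ i (v : D i), w i v * ycc + y i ≤ δ i v)
    (hobj : θ ≤ C * ycc + (∑ i, y i) - δ0) :
    ∀ τ : ∀ i, D i, C ≤ ∑ i, w i (τ i) → θ ≤ (∑ i, δ i (τ i)) - δ0 :=
  boolP_conflict_detection_general D w C δ δ0 θ ycc y hycc hdual hobj
end

section
/- Soft value-removal (reduced cost filtering) correctness: let y_cc ≥ 0 and reals (y_j)_{j∈S} satisfy w_{jv}·y_cc + y_j ≤ δ_{jv} for all j ∈ S, v ∈ D_j, let d = C·y_cc + Σ_{j∈S} y_j − δ_∅ be the dual objective, and for an assignment (i,v) let rc(i,v) = δ_{iv} − w_{iv}·y_cc − y_i. Then every tuple τ ∈ Π_{j∈S} D_j with τ[i] = v and Σ_{j∈S} w_{jτ[j]} ≥ C has cost Σ_{j∈S} δ_{jτ[j]} − δ_∅ ≥ d + rc(i,v). In particular, if d + rc(i,v) ≥ θ, then value (i,v) belongs to no tuple of cost less than θ satisfying the constraint, so (i,v) can be removed from Bool_θ(P). -/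
/-!
Weak duality, sharpened by one reduced cost. For a dual feasible `(ycc, y)` all reduced costs
`δ j v - w j v * ycc - y j` are nonnegative, and summed along a tuple `τ` they give
`cost τ - (∑ w j (τ j)) * ycc - ∑ y j`. Since `ycc ≥ 0` and `τ` satisfies the constraint, this is
at most `cost τ` minus the dual objective; keeping only the term of `i` bounds it below by
`rc(i, τ i)`.
-/

open Finset

section ReducedCost

variable {ι : Type*} [Fintype ι] {D : ι → Type*}

lemma sum_reducedCost_eq (w δ : ∀ j, D j → ℝ) (ycc : ℝ) (y : ι → ℝ) (τ : ∀ j, D j) :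
    ∑ j, (δ j (τ j) - w j (τ j) * ycc - y j) =
      ∑ j, δ j (τ j) - (∑ j, w j (τ j)) * ycc - ∑ j, y j := by
  rw [sum_sub_distrib, sum_sub_distrib, sum_mul]

lemma dualObjective_add_reducedCost_le_sum (w δ : ∀ j, D j → ℝ) (C ycc : ℝ) (y : ι → ℝ)
    (hycc : 0 ≤ ycc) (hdual : ∀ j (v : D j), w j v * ycc + y j ≤ δ j v)
    (τ : ∀ j, D j) (hC : C ≤ ∑ j, w j (τ j)) (i : ι) :
    C * ycc + ∑ j, y j + (δ i (τ i) - w i (τ i) * ycc - y i) ≤ ∑ j, δ j (τ j) := by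
  have hsingle : δ i (τ i) - w i (τ i) * ycc - y i ≤ ∑ j, (δ j (τ j) - w j (τ j) * ycc - y j) :=
    single_le_sum (f := fun j => δ j (τ j) - w j (τ j) * ycc - y j)
      (fun j _ => by linarith [hdual j (τ j)]) (mem_univ i)
  have hcap : C * ycc ≤ (∑ j, w j (τ j)) * ycc := mul_le_mul_of_nonneg_right hC hycc
  rw [sum_reducedCost_eq] at hsingle
  linarith

end ReducedCost

theorem soft_removal_reduced_cost_filtering_general
    {ι : Type*} [Fintype ι]
    (D : ι → Type*)
    (w : ∀ j, D j → ℝ) (C : ℝ)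
    (δ : ∀ j, D j → ℝ) (δ0 : ℝ) (θ : ℝ)
    (ycc : ℝ) (y : ι → ℝ)
    (hycc : 0 ≤ ycc)
    (hdual : ∀ j (v : D j), w j v * ycc + y j ≤ δ j v)
    (d : ℝ) (hd : d = C * ycc + (∑ j, y j) - δ0)
    (i : ι) (v : D i)
    (rc : ℝ) (hrc : rc = δ i v - w i v * ycc - y i) :
    (∀ τ : ∀ j, D j, τ i = v → C ≤ ∑ j, w j (τ j) →
      d + rc ≤ (∑ j, δ j (τ j)) - δ0) ∧
    (θ ≤ d + rc → ∀ τ : ∀ j, D j, τ i = v → C ≤ ∑ j, w j (τ j) →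
      θ ≤ (∑ j, δ j (τ j)) - δ0) := by
  have hbound : ∀ τ : ∀ j, D j, τ i = v → C ≤ ∑ j, w j (τ j) →
      d + rc ≤ (∑ j, δ j (τ j)) - δ0 := by
    rintro τ rfl hC
    have := dualObjective_add_reducedCost_le_sum w δ C ycc y hycc hdual τ hC i
    linarith
  exact ⟨hbound, fun hθ τ hτi hC => hθ.trans (hbound τ hτi hC)⟩

/-- Soft value-removal (reduced cost filtering) correctness: every tuple
assigning `v` to `i` and satisfying the constraint has cost at least `d + rc(i,v)`;
in particular if `d + rc(i,v) ≥ θ` then `(i,v)` belongs to no satisfying tuple of cost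
less than `θ`, so it can be removed from Bool_θ(P). -/
theorem soft_removal_reduced_cost_filtering
    {ι : Type*} [Fintype ι] [Nonempty ι]
    (D : ι → Type*) [∀ j, Fintype (D j)] [∀ j, Nonempty (D j)]
    (w : ∀ j, D j → ℝ) (hw : ∀ j (v : D j), 0 ≤ w j v) (C : ℝ)
    (δ : ∀ j, D j → ℝ) (δ0 : ℝ) (θ : ℝ) (hθ : 0 < θ)
    (ycc : ℝ) (y : ι → ℝ)
    (hycc : 0 ≤ ycc)
    (hdual : ∀ j (v : D j), w j v * ycc + y j ≤ δ j v)
    (d : ℝ) (hd : d = C * ycc + (∑ j, y j) - δ0)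
    (i : ι) (v : D i)
    (rc : ℝ) (hrc : rc = δ i v - w i v * ycc - y i) :
    (∀ τ : ∀ j, D j, τ i = v → C ≤ ∑ j, w j (τ j) →
      d + rc ≤ (∑ j, δ j (τ j)) - δ0) ∧
    (θ ≤ d + rc → ∀ τ : ∀ j, D j, τ i = v → C ≤ ∑ j, w j (τ j) →
      θ ≤ (∑ j, δ j (τ j)) - δ0) :=
  soft_removal_reduced_cost_filtering_general D w C δ δ0 θ ycc y hycc hdual d hd i v rc hrc
end

section
/- Explanation pruning by nonnegative reduced cost: let Q be a set of 'removed' assignments (k,v) with k ∈ S, v ∈ D_k, let (i,a) be an assignment with (i,a) ∉ Q, and let (j,b) ∈ Q with j ≠ i. Suppose y_cc ≥ 0 and reals (y_k)_{k∈S} satisfy: w_{ia}·y_cc + y_i ≤ δ_{ia}; w_{kv}·y_cc + y_k ≤ δ_{kv} for every k ∈ S with k ≠ i and every v ∈ D_k with (k,v) ∉ Q; and additionally w_{jb}·y_cc + y_j ≤ δ_{jb} (i.e., the reduced cost of (j,b) is nonnegative). If C·y_cc + Σ_{k∈S} y_k − δ_∅ ≥ θ, then every tuple τ ∈ Π_{k∈S}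 D_k with τ[i] = a, with (k,τ[k]) ∉ Q \ {(j,b)} for all k, and with Σ_{k∈S} w_{kτ[k]} ≥ C has cost Σ_{k∈S} δ_{kτ[k]} − δ_∅ ≥ θ. Hence (j,b) is not needed in the explanation of the removal of (i,a): the removal of the values in Q \ {(j,b)} already implies that (i,a) has no satisfying tuple of cost less than θ. -/
/-!
Take the dual multipliers `ycc ≥ 0` and `y` as a Lagrangian lower bound: a satisfying tuple `τ`
has cost at least `C * ycc + ∑ y k - δ0` as soon as every chosen value `(k, τ k)` meets its dual
constraint `w k (τ k) * ycc + y k ≤ δ k (τ k)`. A tuple with `τ i = a` avoiding `Q \ {(j,b)}`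
picks for each `k ≠ i` either a value outside `Q` or `(j,b)` itself, and the nonnegative reduced
cost of `(j,b)` is exactly its dual constraint.
-/

open Finset

theorem add_sum_le_sum_of_dual_feasible {ι : Type*} (s : Finset ι) (f y d : ι → ℝ) {C c : ℝ}
    (hc : 0 ≤ c) (hdual : ∀ k ∈ s, f k * c + y k ≤ d k) (hC : C ≤ ∑ k ∈ s, f k) :
    C * c + ∑ k ∈ s, y k ≤ ∑ k ∈ s, d k :=
  calc C * c + ∑ k ∈ s, y k ≤ (∑ k ∈ s, f k) * c + ∑ k ∈ s, y k := by gcongr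
    _ = ∑ k ∈ s, (f k * c + y k) := by rw [sum_mul, sum_add_distrib]
    _ ≤ ∑ k ∈ s, d k := sum_le_sum hdual

theorem Sigma.prop_of_avoids_diff_singleton {ι : Type*} {D : ι → Type*}
    {P : (Σ k, D k) → Prop} {Q : Set (Σ k, D k)} {i : ι} {a : D i} {j : ι} {b : D j}
    (hia : P ⟨i, a⟩) (hQ : ∀ k, k ≠ i → ∀ v : D k, ⟨k, v⟩ ∉ Q → P ⟨k, v⟩) (hjb : P ⟨j, b⟩)
    (τ : ∀ k, D k) (hτi : τ i = a) (hτQ : ∀ k, ⟨k, τ k⟩ ∉ Q \ {⟨j, b⟩}) (k : ι) :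
    P ⟨k, τ k⟩ := by
  by_cases hk : k = i
  · subst hk
    rwa [hτi]
  by_cases hkQ : ⟨k, τ k⟩ ∈ Q
  · have hkj : (⟨k, τ k⟩ : Σ k, D k) = ⟨j, b⟩ := by
      by_contra hne
      exact hτQ k ⟨hkQ, hne⟩
    rwa [hkj]
  · exact hQ k hk (τ k) hkQ

theorem explanation_pruning_general
    {ι : Type*} [Fintype ι]
    (D : ι → Type*)
    (w : ∀ k, D k → ℝ) (C : ℝ)
    (δ : ∀ k, D k → ℝ) (δ0 : ℝ) (θ : ℝ)
    (Q : Set ((k : ι) × D k))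
    (i : ι) (a : D i)
    (j : ι) (b : D j)
    (ycc : ℝ) (y : ι → ℝ)
    (hycc : 0 ≤ ycc)
    (hia' : w i a * ycc + y i ≤ δ i a)
    (hQ : ∀ k, k ≠ i → ∀ v : D k,
      (⟨k, v⟩ : (k : ι) × D k) ∉ Q → w k v * ycc + y k ≤ δ k v)
    (hjb' : w j b * ycc + y j ≤ δ j b)
    (hobj : θ ≤ C * ycc + (∑ k, y k) - δ0) :
    ∀ τ : ∀ k, D k, τ i = a →
      (∀ k, (⟨k, τ k⟩ : (k : ι) × D k) ∉ Q \ {(⟨j, b⟩ : (k : ι) × D k)}) →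
      C ≤ ∑ k, w k (τ k) →
      θ ≤ (∑ k, δ k (τ k)) - δ0 := by
  intro τ hτi hτQ hsat
  have hdual : ∀ k, w k (τ k) * ycc + y k ≤ δ k (τ k) :=
    Sigma.prop_of_avoids_diff_singleton (P := fun p => w p.1 p.2 * ycc + y p.1 ≤ δ p.1 p.2)
      hia' hQ hjb' τ hτi hτQ
  have hbound := add_sum_le_sum_of_dual_feasible univ (fun k => w k (τ k)) y
    (fun k => δ k (τ k)) hycc (fun k _ => hdual k) hsat
  linarith

/-- Explanation pruning by nonnegative reduced cost: if the dual
constraint of a removed value `(j,b)` also holds (its reduced cost is nonnegative),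
then `(j,b)` is not needed in the explanation of the removal of `(i,a)`: every
satisfying tuple assigning `a` to `i` and avoiding `Q \ {(j,b)}` has cost ≥ θ. -/
theorem explanation_pruning
    {ι : Type*} [Fintype ι] [Nonempty ι]
    (D : ι → Type*) [∀ k, Fintype (D k)] [∀ k, Nonempty (D k)]
    (w : ∀ k, D k → ℝ) (hw : ∀ k (v : D k), 0 ≤ w k v) (C : ℝ)
    (δ : ∀ k, D k → ℝ) (δ0 : ℝ) (θ : ℝ) (hθ : 0 < θ)
    (Q : Set ((k : ι) × D k))
    (i : ι) (a : D i) (hia : (⟨i, a⟩ : (k : ι) × D k) ∉ Q)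
    (j : ι) (b : D j) (hji : j ≠ i) (hjb : (⟨j, b⟩ : (k : ι) × D k) ∈ Q)
    (ycc : ℝ) (y : ι → ℝ)
    (hycc : 0 ≤ ycc)
    (hia' : w i a * ycc + y i ≤ δ i a)
    (hQ : ∀ k, k ≠ i → ∀ v : D k,
      (⟨k, v⟩ : (k : ι) × D k) ∉ Q → w k v * ycc + y k ≤ δ k v)
    (hjb' : w j b * ycc + y j ≤ δ j b)
    (hobj : θ ≤ C * ycc + (∑ k, y k) - δ0) :
    ∀ τ : ∀ k, D k, τ i = a →
      (∀ k, (⟨k, τ k⟩ : (k : ι) × D k) ∉ Q \ {(⟨j, b⟩ : (k : ι) × D k)}) →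
      C ≤ ∑ k, w k (τ k) →
      θ ≤ (∑ k, δ k (τ k)) - δ0 :=
  explanation_pruning_general D w C δ δ0 θ Q i a j b ycc y hycc hia' hQ hjb' hobj
end

section
/- Validity of the reparameterization from a dual-feasible solution: let y_cc ≥ 0 and (y_i)_{i∈S} be reals with w_{iv}·y_cc + y_i ≤ δ_{iv} + c_i(v) for all i ∈ S, v ∈ D_i (dual feasibility), let z = C·y_cc + Σ_{i∈S} y_i − δ_∅, and define c'_i(v) = δ_{iv} + c_i(v) − w_{iv}·y_cc − y_i, δ'_{iv} = w_{iv}·y_cc + y_i, and δ'_∅ = δ_∅ + z. Then (a) c'_i(v) ≥ 0 for every i ∈ S and v ∈ D_i, and (b) for every tuple τ with Σ_{i∈S} w_{iτ[i]} ≥ C, the new constraint cost satisfies Σ_{i∈S} δ'_{iτ[i]} − δ'_∅ = y_cc·(Σ_{i∈S} w_{iτ[i]} − C) ≥ 0. Hence the reparameterized problem has no negative costs and its constant cost c_∅ may be increased by z. -/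
theorem Finset.sum_mul_add_sub_shift_eq {ι : Type*} (s : Finset ι) (a u : ι → ℝ) (t C δ0 : ℝ) :
    ∑ i ∈ s, (a i * t + u i) - (δ0 + (C * t + ∑ i ∈ s, u i - δ0)) =
      t * (∑ i ∈ s, a i - C) := by
  rw [Finset.sum_add_distrib, ← Finset.sum_mul]
  ring

theorem reparameterization_validity_general
    {ι : Type*} [Fintype ι]
    (D : ι → Type*)
    (w : ∀ i, D i → ℝ) (C : ℝ)
    (δ : ∀ i, D i → ℝ) (δ0 : ℝ)
    (c : ∀ i, D i → ℝ)
    (ycc : ℝ) (y : ι → ℝ)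
    (hycc : 0 ≤ ycc)
    (hdual : ∀ i (v : D i), w i v * ycc + y i ≤ δ i v + c i v)
    (z : ℝ) (hz : z = C * ycc + (∑ i, y i) - δ0)
    (c' : ∀ i, D i → ℝ)
    (hc' : ∀ i (v : D i), c' i v = δ i v + c i v - w i v * ycc - y i)
    (δ' : ∀ i, D i → ℝ)
    (hδ' : ∀ i (v : D i), δ' i v = w i v * ycc + y i)
    (δ0' : ℝ) (hδ0' : δ0' = δ0 + z) :
    (∀ i (v : D i), 0 ≤ c' i v) ∧
    (∀ τ : ∀ i, D i, C ≤ ∑ i, w i (τ i) →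
      (∑ i, δ' i (τ i)) - δ0' = ycc * ((∑ i, w i (τ i)) - C) ∧
      0 ≤ (∑ i, δ' i (τ i)) - δ0') := by
  refine ⟨fun i v => by rw [hc' i v]; linarith [hdual i v], fun τ hτ => ?_⟩
  have cost : ∑ i, δ' i (τ i) - δ0' = ycc * (∑ i, w i (τ i) - C) := by
    simp only [hδ', hδ0', hz]
    exact Finset.sum_mul_add_sub_shift_eq _ (fun i => w i (τ i)) y ycc C δ0
  exact ⟨cost, cost ▸ mul_nonneg hycc (sub_nonneg.mpr hτ)⟩

/-- Validity of the reparameterization from a dual-feasible solution: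
(a) the new unary costs are nonnegative, and (b) the new constraint cost of every
satisfying tuple equals `y_cc·(Σ w − C)` and is nonnegative. Hence no negative costs
are introduced and c_∅ may be increased by `z`. -/
theorem reparameterization_validity
    {ι : Type*} [Fintype ι] [Nonempty ι]
    (D : ι → Type*) [∀ i, Fintype (D i)] [∀ i, Nonempty (D i)]
    (w : ∀ i, D i → ℝ) (hw : ∀ i (v : D i), 0 ≤ w i v) (C : ℝ)
    (δ : ∀ i, D i → ℝ) (δ0 : ℝ)
    (c : ∀ i, D i → ℝ) (hc : ∀ i (v : D i), 0 ≤ c i v)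
    (ycc : ℝ) (y : ι → ℝ)
    (hycc : 0 ≤ ycc)
    (hdual : ∀ i (v : D i), w i v * ycc + y i ≤ δ i v + c i v)
    (z : ℝ) (hz : z = C * ycc + (∑ i, y i) - δ0)
    (c' : ∀ i, D i → ℝ)
    (hc' : ∀ i (v : D i), c' i v = δ i v + c i v - w i v * ycc - y i)
    (δ' : ∀ i, D i → ℝ)
    (hδ' : ∀ i (v : D i), δ' i v = w i v * ycc + y i)
    (δ0' : ℝ) (hδ0' : δ0' = δ0 + z) :
    (∀ i (v : D i), 0 ≤ c' i v) ∧
    (∀ τ : ∀ i, D i, C ≤ ∑ i, w i (τ i) →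
      (∑ i, δ' i (τ i)) - δ0' = ycc * ((∑ i, w i (τ i)) - C) ∧
      0 ≤ (∑ i, δ' i (τ i)) - δ0') :=
  reparameterization_validity_general D w C δ δ0 c ycc y hycc hdual z hz c' hc' δ' hδ' δ0' hδ0'
end
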